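/- Let Γ be a blue curve that is ⪯-maximal among all borders, and let F consist of Γ(0) together with all blue points lying to the left of Γ(0) in π^0. Then for every j with 1 ≤ j ≤ |F| and every t with 0 ≤ t < C(n,2), if the weight of F_j is δ at time t and δ−1 at time t+1, then τ_{t+1} is a balanced transposition that swaps a point of F with a red point, moves the point of F to the right, and has exactly j−1 points of F strictly to the left of the transposed pair in π^t. -/

import Mathlib

open Finset

/-- An allowable sequence on `n` points (the points are the elements of `Fin n`).
`pos t x` is the position (from left to right, `0`-based) of point `x`
in the linear ordering `π^t`. -/
structure AllowableSeq (n : ℕ) where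
  pos : ℤ → Equiv.Perm (Fin n)
  adj : ∀ t : ℤ, ∃ p q : Fin n,
    ((pos t q : ℕ) = (pos t p : ℕ) + 1) ∧
    pos (t + 1) = (Equiv.swap p q).trans (pos t)
  rev : ∀ t : ℤ, pos (t + (n.choose 2 : ℤ)) = (pos t).trans Fin.revPerm

namespace AllowableSeq

variable {n : ℕ}

/-- The weight of a point: `+1` for blue, `-1` for red. -/
def wt (blue : Fin n → Bool) (x : Fin n) : ℤ := if blue x then 1 else -1

/-- The transposition `τ_{t+1}` (leading from `π^t` to `π^{t+1}`) swaps the points `p` and `q`. -/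
def SwapsAt (A : AllowableSeq n) (t : ℤ) (p q : Fin n) : Prop :=
  p ≠ q ∧ A.pos (t + 1) = (Equiv.swap p q).trans (A.pos t)

/-- `τ_{t+1}` is a balanced transposition swapping `p` and `q`: one of them is blue and the
other red, and the total weight of the points strictly to the left of the adjacent
pair in `π^t` equals `δ`. -/
def BalancedSwap (A : AllowableSeq n) (blue : Fin n → Bool) (δ : ℤ) (t : ℤ)
    (p q : Fin n) : Prop :=
  A.SwapsAt t p q ∧ (blue p ↔ ¬ blue q) ∧
  (∑ x : Fin n, if (A.pos t x : ℕ) < min (A.pos t p : ℕ) (A.pos t q : ℕ)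
      then wt blue x else 0) = δ

/-- The set of unordered pairs of points swapped by some balanced transposition of the
allowable sequence; its cardinality is the number of distinct balanced transpositions. -/
def balancedPairs (A : AllowableSeq n) (blue : Fin n → Bool) (δ : ℤ) : Set (Sym2 (Fin n)) :=
  { s | ∃ p q t, s = s(p, q) ∧ A.BalancedSwap blue δ t p q }

/-- A curve: a map `ℤ → Fin n` that is periodic with period `2 * C(n,2)`. -/
def IsCurve (A : AllowableSeq n) (γ : ℤ → Fin n) : Prop :=
  ∀ t : ℤ, γ (t + 2 * (n.choose 2 : ℤ)) = γ t

/-- The weight of a curve `γ` at time `t`: the sum of the weights of the points lying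
strictly to the left of `γ t` in `π^t`. -/
def cweight (A : AllowableSeq n) (blue : Fin n → Bool) (γ : ℤ → Fin n) (t : ℤ) : ℤ :=
  ∑ x : Fin n, if A.pos t x < A.pos t (γ t) then wt blue x else 0

/-- `γ` is the curve `Q_k` (with `k` 1-based): at every time `t`, `γ t` is the `k`-th point
of `Q` from left to right in `π^t`, i.e. `γ t ∈ Q` and exactly `k - 1` points of `Q` lie
strictly to the left of `γ t`. -/
def IsKth (A : AllowableSeq n) (Q : Finset (Fin n)) (k : ℕ) (γ : ℤ → Fin n) : Prop :=
  ∀ t : ℤ, γ t ∈ Q ∧ (Q.filter (fun x => A.pos t x < A.pos t (γ t))).card = k - 1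

/-- The mirror curve `γ̄` of `γ`, defined by `γ̄ (t + C(n,2)) = γ t`. -/
def mirror (γ : ℤ → Fin n) : ℤ → Fin n := fun t => γ (t - (n.choose 2 : ℤ))

/-- A border: a curve that is either blue and `≥δ` or red and `≤δ`, such that
(I) consecutive values are equal or have no point of the same colour between them, and
(II) it lies strictly to the left of its mirror curve. -/
def IsBorder (A : AllowableSeq n) (blue : Fin n → Bool) (δ : ℤ) (γ : ℤ → Fin n) : Prop :=
  A.IsCurve γ ∧
  (∀ t : ℤ, A.pos t (γ t) < A.pos t (mirror γ t)) ∧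
  (((∀ t : ℤ, blue (γ t) = true) ∧ (∀ t : ℤ, δ ≤ A.cweight blue γ t) ∧
      ∀ t : ℤ, γ (t + 1) = γ t ∨ ∀ x : Fin n, blue x = true →
        ¬ (min (A.pos (t+1) (γ t)) (A.pos (t+1) (γ (t+1))) < A.pos (t+1) x ∧
           A.pos (t+1) x < max (A.pos (t+1) (γ t)) (A.pos (t+1) (γ (t+1)))))
   ∨ ((∀ t : ℤ, blue (γ t) = false) ∧ (∀ t : ℤ, A.cweight blue γ t ≤ δ) ∧
      ∀ t : ℤ, γ (t + 1) = γ t ∨ ∀ x : Fin n, blue x = false →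
        ¬ (min (A.pos (t+1) (γ t)) (A.pos (t+1) (γ (t+1))) < A.pos (t+1) x ∧
           A.pos (t+1) x < max (A.pos (t+1) (γ t)) (A.pos (t+1) (γ (t+1))))))

/-- `Γ` is `⪯`-maximal among all borders: it is a border and no border lies strictly
to its right. -/
def IsMaxBorder (A : AllowableSeq n) (blue : Fin n → Bool) (δ : ℤ) (Γ : ℤ → Fin n) : Prop :=
  A.IsBorder blue δ Γ ∧
  ∀ γ : ℤ → Fin n, A.IsBorder blue δ γ → ¬ (∀ t : ℤ, A.pos t (Γ t) < A.pos t (γ t))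

/-- The curve `α` has the weight change `a ⇝ b` between the curves `lo` and `hi`:
at some time `t` its weight changes from `a` to `b`, the change occurring to the right
of `lo` and to the left of `hi`. -/
def HasChangeBetween (A : AllowableSeq n) (blue : Fin n → Bool) (a b : ℤ)
    (α lo hi : ℤ → Fin n) : Prop :=
  ∃ t : ℤ, A.cweight blue α t = a ∧ A.cweight blue α (t+1) = b ∧
    A.pos t (lo t) ≤ A.pos t (α t) ∧ A.pos (t+1) (lo (t+1)) < A.pos (t+1) (α (t+1)) ∧
    A.pos t (α t) ≤ A.pos t (hi t) ∧ A.pos (t+1) (α (t+1)) < A.pos (t+1) (hi (t+1))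

/-- The number of blue points strictly to the left of the adjacent pair `p, q` in `π^t`. -/
def blueLeftPair (A : AllowableSeq n) (blue : Fin n → Bool) (t : ℤ) (p q : Fin n) : ℕ :=
  (Finset.univ.filter (fun y => blue y = true ∧
    (A.pos t y : ℕ) < min (A.pos t p : ℕ) (A.pos t q : ℕ))).card

end AllowableSeq

open AllowableSeq

/-!
Let `τ_{t+1}` swap `p` with its right neighbour `q`. The weight of `F_j` can drop by one only if
`F_j = p` passes a red point `q ∉ F` (the claimed balanced swap), or a blue point `p ∉ F`
passes `F_j = q`. The latter is impossible for `0 ≤ t < C(n,2)`: `p` lies right of `Γ(0)`, hence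
of `q`, at time `0`, but left of `q` at times `t + 1 - C(n,2)` (reversal) and `t`, so the pair
would change order twice within the half-period `[t + 1 - C(n,2), t]`. A pair never does: the
pairs inverted relative to time `u₀` grow by at most one per step and number `C(n,2)` at time
`u₀ + C(n,2)`, so they increase by exactly one at each step.
-/

namespace AllowableSeq

variable {n : ℕ} (A : AllowableSeq n)

def leftOf (u : ℤ) (x : Fin n) : Finset (Fin n) := {y | A.pos u y < A.pos u x}

@[simp]
lemma mem_leftOf {u : ℤ} {x y : Fin n} : y ∈ A.leftOf u x ↔ A.pos u y < A.pos u x := by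
  simp [leftOf]

lemma filter_pos_lt_eq_inter_leftOf (Q : Finset (Fin n)) (u : ℤ) (x : Fin n) :
    Q.filter (fun y => A.pos u y < A.pos u x) = Q ∩ A.leftOf u x := by
  ext; simp

lemma cweight_eq_sum_leftOf (blue : Fin n → Bool) (γ : ℤ → Fin n) (u : ℤ) :
    A.cweight blue γ u = ∑ y ∈ A.leftOf u (γ u), wt blue y :=
  (Finset.sum_filter _ _).symm

lemma wt_eq_one_iff {blue : Fin n → Bool} {x : Fin n} : wt blue x = 1 ↔ blue x = true := by
  unfold wt; split_ifs <;> simp_all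

lemma wt_eq_neg_one_iff {blue : Fin n → Bool} {x : Fin n} :
    wt blue x = -1 ↔ blue x = false := by
  unfold wt; split_ifs <;> simp_all

lemma wt_eq_one_or_eq_neg_one (blue : Fin n → Bool) (x : Fin n) :
    wt blue x = 1 ∨ wt blue x = -1 := by
  unfold wt; split_ifs <;> simp

lemma pos_add_choose_lt_iff (u : ℤ) {a b : Fin n} :
    A.pos (u + n.choose 2) a < A.pos (u + n.choose 2) b ↔ A.pos u b < A.pos u a := by
  rw [A.rev]
  exact Fin.rev_lt_rev

lemma val_pos_ne (u : ℤ) {x y : Fin n} (hxy : x ≠ y) : (A.pos u x : ℕ) ≠ A.pos u y :=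
  fun hv => hxy ((A.pos u).injective (Fin.val_injective hv))

def inversions (u₀ u : ℤ) : Finset (Fin n × Fin n) :=
  {ab | A.pos u₀ ab.1 < A.pos u₀ ab.2 ∧ A.pos u ab.2 < A.pos u ab.1}

@[simp]
lemma mem_inversions {u₀ u : ℤ} {a b : Fin n} :
    (a, b) ∈ A.inversions u₀ u ↔ A.pos u₀ a < A.pos u₀ b ∧ A.pos u b < A.pos u a := by
  simp [inversions]

lemma inversions_self (u₀ : ℤ) : A.inversions u₀ u₀ = ∅ := by
  ext ⟨a, b⟩
  simp only [mem_inversions, Finset.notMem_empty, iff_false, not_and]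
  exact lt_asymm

def SwapsAdjacent (t : ℤ) (p q : Fin n) : Prop :=
  (A.pos t q : ℕ) = A.pos t p + 1 ∧ A.pos (t + 1) = (Equiv.swap p q).trans (A.pos t)

lemma exists_swapsAdjacent (t : ℤ) : ∃ p q, A.SwapsAdjacent t p q := A.adj t

namespace SwapsAdjacent

variable {A} {t : ℤ} {p q : Fin n}

lemma ne (h : A.SwapsAdjacent t p q) : p ≠ q := by
  rintro rfl
  exact absurd h.1 (by omega)

lemma swapsAt (h : A.SwapsAdjacent t p q) : A.SwapsAt t p q := ⟨h.ne, h.2⟩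

lemma pos_succ_apply (h : A.SwapsAdjacent t p q) (x : Fin n) :
    A.pos (t + 1) x = A.pos t (Equiv.swap p q x) := by
  rw [h.2]; rfl

lemma val_pos_succ_apply (h : A.SwapsAdjacent t p q) (x : Fin n) :
    (A.pos (t + 1) x : ℕ) =
      if x = p then (A.pos t p : ℕ) + 1 else if x = q then (A.pos t p : ℕ) else A.pos t x := by
  rw [h.pos_succ_apply]
  split_ifs with hp hq
  · rw [hp, Equiv.swap_apply_left, h.1]
  · rw [hq, Equiv.swap_apply_right]
  · rw [Equiv.swap_apply_of_ne_of_ne hp hq]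

lemma leftOf_right (h : A.SwapsAdjacent t p q) : A.leftOf t q = insert p (A.leftOf t p) := by
  ext y
  simp only [mem_leftOf, Finset.mem_insert, Fin.lt_def, h.1]
  rcases eq_or_ne y p with rfl | hyp
  · simp
  · have := A.val_pos_ne t hyp
    simp only [hyp, false_or]
    omega

lemma leftOf_succ_left (h : A.SwapsAdjacent t p q) :
    A.leftOf (t + 1) p = insert q (A.leftOf t p) := by
  ext y
  simp only [mem_leftOf, Finset.mem_insert, Fin.lt_def, h.val_pos_succ_apply, if_true]
  rcases eq_or_ne y p with rfl | hyp
  · simp [h.ne]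
  rcases eq_or_ne y q with rfl | hyq
  · simp [hyp]
  · have := A.val_pos_ne t hyp
    have := A.val_pos_ne t hyq
    simp only [hyp, hyq, if_false, false_or]
    omega

lemma leftOf_succ_right (h : A.SwapsAdjacent t p q) : A.leftOf (t + 1) q = A.leftOf t p := by
  ext y
  have := h.1
  simp only [mem_leftOf, Fin.lt_def, h.val_pos_succ_apply, if_neg h.ne.symm, if_true]
  rcases eq_or_ne y p with rfl | hyp
  · simp
  rcases eq_or_ne y q with rfl | hyq
  · simp only [hyp, if_false, if_true, lt_self_iff_false, false_iff, not_lt]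
    omega
  · simp only [hyp, hyq, if_false]

lemma leftOf_succ_of_ne (h : A.SwapsAdjacent t p q) {x : Fin n} (hxp : x ≠ p) (hxq : x ≠ q) :
    A.leftOf (t + 1) x = A.leftOf t x := by
  ext y
  have := A.val_pos_ne t hxp
  have := A.val_pos_ne t hxq
  have := h.1
  simp only [mem_leftOf, Fin.lt_def, h.val_pos_succ_apply, hxp, hxq, if_false]
  rcases eq_or_ne y p with rfl | hyp
  · simp only [if_true]
    omega
  rcases eq_or_ne y q with rfl | hyq
  · simp only [hyp, if_false, if_true]
    omega
  · simp only [hyp, hyq, if_false]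

lemma min_val_pos_eq_left (h : A.SwapsAdjacent t p q) :
    min (A.pos t p : ℕ) (A.pos t q) = A.pos t p := by
  rw [h.1]; omega

lemma right_notMem_leftOf (h : A.SwapsAdjacent t p q) : q ∉ A.leftOf t p := by
  simp [Fin.lt_def, h.1]

lemma pos_succ_lt_pos_succ_iff (h : A.SwapsAdjacent t p q) {a b : Fin n}
    (hab : s(a, b) ≠ s(p, q)) :
    A.pos (t + 1) b < A.pos (t + 1) a ↔ A.pos t b < A.pos t a := by
  simp only [ne_eq, Sym2.eq_iff, not_or, not_and] at hab
  simp only [← mem_leftOf]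
  rcases eq_or_ne a p with rfl | hap
  · rw [h.leftOf_succ_left, Finset.mem_insert, or_iff_right (hab.1 rfl)]
  rcases eq_or_ne a q with rfl | haq
  · rw [h.leftOf_succ_right, h.leftOf_right, Finset.mem_insert, or_iff_right (hab.2 rfl)]
  · rw [h.leftOf_succ_of_ne hap haq]

lemma exists_inversions_succ (h : A.SwapsAdjacent t p q)
    (u₀ : ℤ) : ∃ e, A.inversions u₀ (t + 1) ⊆ insert e (A.inversions u₀ t) ∧
      A.inversions u₀ t ⊆ insert e (A.inversions u₀ (t + 1)) := by
  set e := if A.pos u₀ p < A.pos u₀ q then (p, q) else (q, p)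
  have hswapped : ∀ a b, s(a, b) = s(p, q) → A.pos u₀ a < A.pos u₀ b → (a, b) = e := by
    rintro a b hab hlt
    rcases Sym2.eq_iff.1 hab with ⟨rfl, rfl⟩ | ⟨rfl, rfl⟩
    · simp [e, hlt]
    · simp [e, hlt.not_gt]
  have hkept : ∀ a b, s(a, b) ≠ s(p, q) →
      ((a, b) ∈ A.inversions u₀ (t + 1) ↔ (a, b) ∈ A.inversions u₀ t) := by
    intro a b hab
    rw [mem_inversions, mem_inversions, h.pos_succ_lt_pos_succ_iff hab]
  refine ⟨e, ?_, ?_⟩ <;> rintro ⟨a, b⟩ hmem <;> rw [Finset.mem_insert] <;>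
    by_cases hab : s(a, b) = s(p, q)
  · exact .inl (hswapped a b hab ((A.mem_inversions).1 hmem).1)
  · exact .inr ((hkept a b hab).1 hmem)
  · exact .inl (hswapped a b hab ((A.mem_inversions).1 hmem).1)
  · exact .inr ((hkept a b hab).2 hmem)

end SwapsAdjacent

lemma card_inversions_add_choose (u₀ : ℤ) :
    #(A.inversions u₀ (u₀ + n.choose 2)) = n.choose 2 := by
  have hinv : A.inversions u₀ (u₀ + n.choose 2) =
      ({ab : Fin n × Fin n | A.pos u₀ ab.1 < A.pos u₀ ab.2} : Finset _) := by
    ext ⟨a, b⟩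
    simp [pos_add_choose_lt_iff]
  rw [hinv, Finset.card_equiv ((A.pos u₀).prodCongr (A.pos u₀))
    (t := {x : Fin n × Fin n | x.1 < x.2}) (by simp), Fintype.card_product_filter_lt,
    Fintype.card_fin]

lemma card_inversions_add_le (u₀ u : ℤ) (k : ℕ) :
    #(A.inversions u₀ (u + k)) ≤ #(A.inversions u₀ u) + k := by
  induction k with
  | zero => simp
  | succ k ih =>
    obtain ⟨p, q, h⟩ := A.exists_swapsAdjacent (u + k)
    obtain ⟨e, hsub, -⟩ := h.exists_inversions_succ u₀
    calc #(A.inversions u₀ (u + (k + 1 : ℕ)))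
        = #(A.inversions u₀ (u + k + 1)) := by push_cast; ring_nf
      _ ≤ #(insert e (A.inversions u₀ (u + k))) := Finset.card_le_card hsub
      _ ≤ #(A.inversions u₀ (u + k)) + 1 := Finset.card_insert_le _ _
      _ ≤ #(A.inversions u₀ u) + (k + 1) := by omega

lemma card_inversions_add {u₀ : ℤ} {k : ℕ} (hk : k ≤ n.choose 2) :
    #(A.inversions u₀ (u₀ + k)) = k := by
  have hle := A.card_inversions_add_le u₀ u₀ k
  have hge := A.card_inversions_add_le u₀ (u₀ + k) (n.choose 2 - k)
  rw [A.inversions_self, Finset.card_empty, zero_add] at hle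
  rw [Nat.cast_sub hk, add_add_sub_cancel, A.card_inversions_add_choose] at hge
  omega

lemma inversions_subset_succ {u₀ : ℤ} {k : ℕ} (hk : k < n.choose 2) :
    A.inversions u₀ (u₀ + k) ⊆ A.inversions u₀ (u₀ + k + 1) := by
  obtain ⟨p, q, h⟩ := A.exists_swapsAdjacent (u₀ + k)
  obtain ⟨e, hsucc, hsub⟩ := h.exists_inversions_succ u₀
  have hcard := A.card_inversions_add (u₀ := u₀) hk.le
  have hcard' := A.card_inversions_add (u₀ := u₀) (k := k + 1) hk
  push_cast at hcard'
  rw [← add_assoc] at hcard'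
  intro x hx
  by_contra hx'
  have he : e ∈ A.inversions u₀ (u₀ + k) := by
    have := hsub hx
    rw [Finset.mem_insert] at this
    exact (this.resolve_right hx') ▸ hx
  have := Finset.card_le_card (hsucc.trans (Finset.insert_subset he subset_rfl))
  omega

lemma pos_lt_pos_of_inversion {u₀ : ℤ} {a b : Fin n} (h₀ : A.pos u₀ a < A.pos u₀ b)
    {k l : ℕ} (hkl : k ≤ l) (hl : l ≤ n.choose 2)
    (hk : A.pos (u₀ + k) b < A.pos (u₀ + k) a) : A.pos (u₀ + l) b < A.pos (u₀ + l) a := by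
  induction l, hkl using Nat.le_induction with
  | base => exact hk
  | succ l hkl ih =>
    have hmem := A.inversions_subset_succ (u₀ := u₀) (by omega)
      (A.mem_inversions.2 ⟨h₀, ih (by omega)⟩)
    push_cast
    rw [← add_assoc]
    exact (A.mem_inversions.1 hmem).2

variable {A} in
lemma SwapsAdjacent.pos_lt_pos_of_le_of_le {t u : ℤ} {p q : Fin n} (h : A.SwapsAdjacent t p q)
    (hu : t + 1 - n.choose 2 ≤ u) (hut : u ≤ t) : A.pos u p < A.pos u q := by
  set u₀ := t + 1 - (n.choose 2 : ℤ)
  have h₀ : A.pos u₀ p < A.pos u₀ q := by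
    rw [← A.pos_add_choose_lt_iff, show u₀ + n.choose 2 = t + 1 by omega, Fin.lt_def,
      h.val_pos_succ_apply, h.val_pos_succ_apply]
    simp [h.ne.symm]
  obtain ⟨k, rfl⟩ := Int.le.dest hu
  obtain ⟨l, hl⟩ := Int.le.dest (hu.trans hut)
  by_contra hnot
  have hqp : A.pos (u₀ + k) q < A.pos (u₀ + k) p :=
    lt_of_le_of_ne (not_lt.1 hnot) ((A.pos _).injective.ne h.ne.symm)
  have := A.pos_lt_pos_of_inversion h₀ (l := l) (by omega) (by omega) hqp
  rw [hl, Fin.lt_def, h.1] at this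
  omega

section Kth

variable {A} {Q : Finset (Fin n)} {k : ℕ} {γ : ℤ → Fin n}

lemma eq_of_card_inter_leftOf_eq {u : ℤ} {y z : Fin n} (hy : y ∈ Q) (hz : z ∈ Q)
    (h : #(Q ∩ A.leftOf u y) = #(Q ∩ A.leftOf u z)) : y = z := by
  by_contra hne
  wlog hlt : A.pos u y < A.pos u z generalizing y z
  · exact this hz hy h.symm (Ne.symm hne)
      (lt_of_le_of_ne (not_lt.1 hlt) ((A.pos u).injective.ne (Ne.symm hne)))
  have hss : Q ∩ A.leftOf u y ⊂ Q ∩ A.leftOf u z := by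
    refine Finset.ssubset_iff_of_subset (fun x hx => ?_) |>.2 ⟨y, by simp [hy, hlt], by simp⟩
    simp only [Finset.mem_inter, mem_leftOf] at hx ⊢
    exact ⟨hx.1, hx.2.trans hlt⟩
  exact (Finset.card_lt_card hss).ne h

namespace IsKth

lemma card_inter_leftOf (hγ : A.IsKth Q k γ) (u : ℤ) : #(Q ∩ A.leftOf u (γ u)) = k - 1 := by
  rw [← filter_pos_lt_eq_inter_leftOf]
  exact (hγ u).2

lemma eq_of_card_inter_leftOf (hγ : A.IsKth Q k γ) {u : ℤ} {z : Fin n} (hz : z ∈ Q)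
    (h : #(Q ∩ A.leftOf u z) = k - 1) : γ u = z :=
  eq_of_card_inter_leftOf_eq (hγ u).1 hz (by rw [hγ.card_inter_leftOf, h])

variable {blue : Fin n → Bool} {t : ℤ} {p q : Fin n}

lemma cweight_succ_of_ne (hγ : A.IsKth Q k γ) (h : A.SwapsAdjacent t p q) (hp : γ t ≠ p)
    (hq : γ t ≠ q) : A.cweight blue γ (t + 1) = A.cweight blue γ t := by
  have hL := h.leftOf_succ_of_ne hp hq
  have hγ' : γ (t + 1) = γ t :=
    hγ.eq_of_card_inter_leftOf (hγ t).1 (by rw [hL, hγ.card_inter_leftOf])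
  rw [cweight_eq_sum_leftOf, cweight_eq_sum_leftOf, hγ', hL]

lemma cweight_succ_of_eq_left_of_mem (hγ : A.IsKth Q k γ) (h : A.SwapsAdjacent t p q)
    (hp : γ t = p) (hq : q ∈ Q) : A.cweight blue γ (t + 1) = A.cweight blue γ t := by
  have hγ' : γ (t + 1) = q :=
    hγ.eq_of_card_inter_leftOf hq (by rw [h.leftOf_succ_right, ← hp, hγ.card_inter_leftOf])
  rw [cweight_eq_sum_leftOf, cweight_eq_sum_leftOf, hγ', hp, h.leftOf_succ_right]

lemma cweight_succ_of_eq_left_of_notMem (hγ : A.IsKth Q k γ) (h : A.SwapsAdjacent t p q)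
    (hp : γ t = p) (hq : q ∉ Q) :
    A.cweight blue γ (t + 1) = A.cweight blue γ t + wt blue q := by
  have hγ' : γ (t + 1) = p := by
    refine hγ.eq_of_card_inter_leftOf (hp ▸ (hγ t).1) ?_
    rw [h.leftOf_succ_left, Finset.inter_insert_of_notMem hq, ← hp, hγ.card_inter_leftOf]
  rw [cweight_eq_sum_leftOf, cweight_eq_sum_leftOf, hγ', hp, h.leftOf_succ_left,
    Finset.sum_insert h.right_notMem_leftOf, add_comm]

lemma cweight_succ_of_eq_right_of_mem (hγ : A.IsKth Q k γ) (h : A.SwapsAdjacent t p q)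
    (hq : γ t = q) (hp : p ∈ Q) :
    A.cweight blue γ (t + 1) + wt blue p = A.cweight blue γ t + wt blue q := by
  have hqQ : q ∈ Q := hq ▸ (hγ t).1
  have hpL : p ∉ Q ∩ A.leftOf t p := by simp
  have hqL : q ∉ Q ∩ A.leftOf t p := by simp [h.right_notMem_leftOf]
  have hγ' : γ (t + 1) = p := by
    refine hγ.eq_of_card_inter_leftOf hp ?_
    rw [← hγ.card_inter_leftOf t, hq, h.leftOf_succ_left, h.leftOf_right,
      Finset.inter_insert_of_mem hqQ, Finset.inter_insert_of_mem hp,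
      Finset.card_insert_of_notMem hqL, Finset.card_insert_of_notMem hpL]
  rw [cweight_eq_sum_leftOf, cweight_eq_sum_leftOf, hγ', hq, h.leftOf_succ_left,
    h.leftOf_right, Finset.sum_insert h.right_notMem_leftOf, Finset.sum_insert (by simp)]
  ring

lemma cweight_succ_of_eq_right_of_notMem (hγ : A.IsKth Q k γ) (h : A.SwapsAdjacent t p q)
    (hq : γ t = q) (hp : p ∉ Q) :
    A.cweight blue γ (t + 1) + wt blue p = A.cweight blue γ t := by
  have hγ' : γ (t + 1) = q := by
    refine hγ.eq_of_card_inter_leftOf (hq ▸ (hγ t).1) ?_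
    rw [h.leftOf_succ_right, ← Finset.inter_insert_of_notMem hp, ← h.leftOf_right, ← hq,
      hγ.card_inter_leftOf]
  rw [cweight_eq_sum_leftOf, cweight_eq_sum_leftOf, hγ', hq, h.leftOf_succ_right,
    h.leftOf_right, Finset.sum_insert (by simp), add_comm]

lemma cweight_succ_eq_sub_one (hγ : A.IsKth Q k γ) (h : A.SwapsAdjacent t p q)
    (hw : A.cweight blue γ (t + 1) = A.cweight blue γ t - 1) :
    (γ t = p ∧ q ∉ Q ∧ blue q = false) ∨ (γ t = q ∧ p ∉ Q ∧ blue p = true) := by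
  by_cases hp : γ t = p
  · by_cases hqQ : q ∈ Q
    · have := hγ.cweight_succ_of_eq_left_of_mem (blue := blue) h hp hqQ
      omega
    · have := hγ.cweight_succ_of_eq_left_of_notMem (blue := blue) h hp hqQ
      exact .inl ⟨hp, hqQ, wt_eq_neg_one_iff.1 (by omega)⟩
  by_cases hq : γ t = q
  · by_cases hpQ : p ∈ Q
    · have := hγ.cweight_succ_of_eq_right_of_mem (blue := blue) h hq hpQ
      rcases wt_eq_one_or_eq_neg_one blue p with hp' | hp' <;>
        rcases wt_eq_one_or_eq_neg_one blue q with hq' | hq' <;> omega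
    · have := hγ.cweight_succ_of_eq_right_of_notMem (blue := blue) h hq hpQ
      exact .inr ⟨hq, hpQ, wt_eq_one_iff.1 (by omega)⟩
  · have := hγ.cweight_succ_of_ne (blue := blue) h hp hq
    omega

end IsKth

end Kth

end AllowableSeq

theorem Fj_down_change_balanced_general (n δ : ℕ) (A : AllowableSeq n) (blue : Fin n → Bool)
    (Γ : ℤ → Fin n)
    (F : Finset (Fin n))
    (hF : F = Finset.univ.filter (fun x => blue x = true ∧ A.pos 0 x ≤ A.pos 0 (Γ 0)))
    (j : ℕ)
    (γ : ℤ → Fin n) (hγ : A.IsKth F j γ)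
    (t : ℤ) (ht0 : 0 ≤ t) (htN : t < (n.choose 2 : ℤ))
    (h1 : A.cweight blue γ t = (δ : ℤ)) (h2 : A.cweight blue γ (t+1) = (δ : ℤ) - 1) :
    ∃ f x : Fin n, f ∈ F ∧ blue x = false ∧ A.SwapsAt t f x ∧
      (A.pos t x : ℕ) = (A.pos t f : ℕ) + 1 ∧
      A.BalancedSwap blue (δ : ℤ) t f x ∧
      (F.filter (fun y =>
        (A.pos t y : ℕ) < min (A.pos t f : ℕ) (A.pos t x : ℕ))).card = j - 1 := by
  obtain ⟨p, q, h⟩ := A.exists_swapsAdjacent t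
  rcases hγ.cweight_succ_eq_sub_one h (by rw [h1, h2]) with ⟨hp, -, hq⟩ | ⟨hq, hpF, hp⟩
  · have hpF : p ∈ F := hp ▸ (hγ t).1
    have hpblue : blue p = true := by
      rw [hF] at hpF
      exact (Finset.mem_filter.1 hpF).2.1
    refine ⟨p, q, hpF, hq, h.swapsAt, h.1, ⟨h.swapsAt, by simp [hpblue, hq], ?_⟩, ?_⟩
    · simpa only [h.min_val_pos_eq_left, Fin.val_fin_lt, cweight, hp] using h1
    · simpa only [h.min_val_pos_eq_left, Fin.val_fin_lt, hp] using (hγ t).2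
  · have h0 := h.pos_lt_pos_of_le_of_le (u := 0) (by omega) ht0
    have hqF : q ∈ F := hq ▸ (hγ t).1
    simp only [hF, Finset.mem_filter, Finset.mem_univ, true_and, hp, not_le] at hpF hqF
    exact absurd (hpF.trans h0) (not_lt.2 hqF.2)

theorem Fj_down_change_balanced (n b r δ : ℕ) (A : AllowableSeq n) (blue : Fin n → Bool)
    (hn : n = b + r)
    (hb : (Finset.univ.filter (fun x => blue x = true)).card = b)
    (hr : (Finset.univ.filter (fun x => blue x = false)).card = r)
    (hbr : b = r + 2 * δ)
    (Γ : ℤ → Fin n) (hΓblue : ∀ t : ℤ, blue (Γ t) = true)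
    (hΓ : A.IsMaxBorder blue (δ : ℤ) Γ)
    (F : Finset (Fin n))
    (hF : F = Finset.univ.filter (fun x => blue x = true ∧ A.pos 0 x ≤ A.pos 0 (Γ 0)))
    (j : ℕ) (hj1 : 1 ≤ j) (hj2 : j ≤ F.card)
    (γ : ℤ → Fin n) (hγ : A.IsKth F j γ)
    (t : ℤ) (ht0 : 0 ≤ t) (htN : t < (n.choose 2 : ℤ))
    (h1 : A.cweight blue γ t = (δ : ℤ)) (h2 : A.cweight blue γ (t+1) = (δ : ℤ) - 1) :
    ∃ f x : Fin n, f ∈ F ∧ blue x = false ∧ A.SwapsAt t f x ∧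
      (A.pos t x : ℕ) = (A.pos t f : ℕ) + 1 ∧
      A.BalancedSwap blue (δ : ℤ) t f x ∧
      (F.filter (fun y =>
        (A.pos t y : ℕ) < min (A.pos t f : ℕ) (A.pos t x : ℕ))).card = j - 1 :=
  Fj_down_change_balanced_general n δ A blue Γ F hF j γ hγ t ht0 htN h1 h2
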